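/- For real parameters λ > Λ > 0 and b > 0, the infimum over t > 0 of t·ψ*(b/t) equals b·log(λ/Λ), and it is attained at t = b/(λ − Λ); that is, for every t > 0 one has t·ψ*(b/t) ≥ b·log(λ/Λ), with equality when t = b/(λ − Λ). Consequently the large-deviation rate function of the voting failure event is I(b) = b·log(λ/Λ). -/

import Mathlib

/-!
The nonzero root of `ψ` is `θ₀ = log (λ / Λ)`, so `ψ*(x) ≥ θ₀ x - ψ(θ₀) = θ₀ x` for every `x`,
and hence `t ψ*(b / t) ≥ θ₀ b` for every `t > 0`. Since `ψ'(θ₀) = λ - Λ`, convexity of `ψ`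
makes `θ₀` the maximiser in `ψ*(λ - Λ)`, so the bound is attained at `t = b / (λ - Λ)`.
-/

open Real Set

noncomputable section

/-- The convex conjugate `f*`; it takes the junk value `0` where the range is unbounded. -/
def legendreTransform (f : ℝ → ℝ) (x : ℝ) : ℝ :=
  sSup (range fun θ => θ * x - f θ)

/-- The paper's `ψ`, with `lam = λ` and `Lam = Λ`. -/
def queueCGF (lam Lam θ : ℝ) : ℝ :=
  Lam * (exp θ - 1) + lam * (exp (-θ) - 1)

end

/-- Fenchel–Young inequality for `a exp`, whose conjugate is `x log (x / a) - x`. -/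
lemma mul_le_mul_exp_add_mul_log {a x : ℝ} (ha : 0 < a) (hx : 0 ≤ x) (θ : ℝ) :
    θ * x ≤ a * exp θ + x * log (x / a) - x := by
  rcases hx.eq_or_lt with rfl | hx
  · simp only [mul_zero, zero_mul, sub_zero, add_zero]
    positivity
  have hexp : x * exp (θ - log (x / a)) = a * exp θ := by
    rw [exp_sub, exp_log (by positivity)]
    field_simp
  nlinarith [mul_le_mul_of_nonneg_left (add_one_le_exp (θ - log (x / a))) hx.le]

namespace queueCGF

variable {lam Lam : ℝ}

lemma log_div_eq_zero (hlam : 0 < lam) (hLam : 0 < Lam) :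
    queueCGF lam Lam (log (lam / Lam)) = 0 := by
  rw [queueCGF, exp_neg, exp_log (by positivity)]
  field_simp
  ring

/-- `ψ` lies above its tangent line at `log (λ / Λ)`, where `ψ' = λ - Λ` and `ψ = 0`. -/
lemma tangent_le (hlam : 0 < lam) (hLam : 0 < Lam) (θ : ℝ) :
    (θ - log (lam / Lam)) * (lam - Lam) ≤ queueCGF lam Lam θ := by
  set u := θ - log (lam / Lam)
  have hexp : exp θ = lam / Lam * exp u := by
    rw [← exp_log (div_pos hlam hLam), ← exp_add, add_sub_cancel]
  have hexp_neg : exp (-θ) = Lam / lam * exp (-u) := by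
    rw [exp_neg θ, hexp, exp_neg u]
    field_simp
  rw [queueCGF, hexp, hexp_neg]
  have hu := mul_le_mul_of_nonneg_left (add_one_le_exp u) hlam.le
  have hnu := mul_le_mul_of_nonneg_left (add_one_le_exp (-u)) hLam.le
  field_simp
  nlinarith

lemma bddAbove_range (hlam : 0 < lam) (hLam : 0 < Lam) (x : ℝ) :
    BddAbove (range fun θ => θ * x - queueCGF lam Lam θ) := by
  rcases le_total 0 x with hx | hx
  · refine ⟨x * log (x / Lam) - x + Lam + lam, ?_⟩
    rintro _ ⟨θ, rfl⟩
    have := mul_le_mul_exp_add_mul_log hLam hx θ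
    simp only [queueCGF]
    nlinarith [exp_pos (-θ)]
  · refine ⟨-x * log (-x / lam) + x + Lam + lam, ?_⟩
    rintro _ ⟨θ, rfl⟩
    have := mul_le_mul_exp_add_mul_log hlam (neg_nonneg.mpr hx) (-θ)
    simp only [queueCGF]
    nlinarith [exp_pos θ]

lemma mul_le_legendreTransform (hlam : 0 < lam) (hLam : 0 < Lam) (x : ℝ) :
    log (lam / Lam) * x ≤ legendreTransform (queueCGF lam Lam) x := by
  have := le_csSup (bddAbove_range hlam hLam x) (mem_range_self (log (lam / Lam)))
  rwa [log_div_eq_zero hlam hLam, sub_zero] at this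

lemma legendreTransform_sub (hlam : 0 < lam) (hLam : 0 < Lam) :
    legendreTransform (queueCGF lam Lam) (lam - Lam) = log (lam / Lam) * (lam - Lam) := by
  refine IsGreatest.csSup_eq ⟨⟨log (lam / Lam), by simp [log_div_eq_zero hlam hLam]⟩, ?_⟩
  rintro _ ⟨θ, rfl⟩
  linarith [tangent_le hlam hLam θ]

end queueCGF

/-- For `lam > Lam > 0` and `b > 0`, the infimum over `t > 0` of `t * ψ*(b/t)`
equals `b * log (lam / Lam)`, attained at `t = b / (lam - Lam)`; that is, for every
`t > 0` one has `t * ψ*(b/t) ≥ b log(lam/Lam)`, with equality when `t = b/(lam-Lam)`.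
Consequently the large-deviation rate function is `I(b) = b log(lam/Lam)`. -/
theorem stmt4 (lam Lam b : ℝ) (hLam : 0 < Lam) (h : Lam < lam) (hb : 0 < b)
    (ψs : ℝ → ℝ)
    (hψs : ∀ x : ℝ, ψs x = sSup (Set.range fun θ : ℝ =>
        θ * x - Lam * (Real.exp θ - 1) - lam * (Real.exp (-θ) - 1))) :
    (∀ t : ℝ, 0 < t → b * Real.log (lam / Lam) ≤ t * ψs (b / t)) ∧
    (b / (lam - Lam)) * ψs (b / (b / (lam - Lam))) = b * Real.log (lam / Lam) ∧
    sInf {y : ℝ | ∃ t : ℝ, 0 < t ∧ y = t * ψs (b / t)} = b * Real.log (lam / Lam) := by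
  have hlam : 0 < lam := hLam.trans h
  have hdrift : lam - Lam ≠ 0 := sub_ne_zero.mpr h.ne'
  obtain rfl : ψs = legendreTransform (queueCGF lam Lam) := by
    funext x
    rw [hψs, legendreTransform]
    simp only [queueCGF, sub_sub]
  have lower (t : ℝ) (ht : 0 < t) :
      b * log (lam / Lam) ≤ t * legendreTransform (queueCGF lam Lam) (b / t) := by
    calc b * log (lam / Lam) = t * (log (lam / Lam) * (b / t)) := by field_simp
      _ ≤ _ := mul_le_mul_of_nonneg_left (queueCGF.mul_le_legendreTransform hlam hLam _) ht.le
  have attained : b / (lam - Lam) * legendreTransform (queueCGF lam Lam) (b / (b / (lam - Lam)))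
      = b * log (lam / Lam) := by
    rw [div_div_cancel₀ hb.ne', queueCGF.legendreTransform_sub hlam hLam]
    field_simp
  have least : IsLeast {y | ∃ t, 0 < t ∧ y = t * legendreTransform (queueCGF lam Lam) (b / t)}
      (b * log (lam / Lam)) :=
    ⟨⟨b / (lam - Lam), div_pos hb (sub_pos.mpr h), attained.symm⟩,
      by rintro _ ⟨t, ht, rfl⟩; exact lower t ht⟩
  exact ⟨lower, attained, least.csInf_eq⟩
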